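/- Let C(t) be a T-periodic Lipschitz moving closed convex set and X the set of T-periodic solutions of the sweeping process -x' ∈ N_{C(t)}(x). Then X is a convex subset of C(ℝ, E): if x, y ∈ X and θ ∈ (0,1), then t ↦ θx(t) + (1−θ)y(t) is also a T-periodic solution. -/

import Mathlib

open MeasureTheory InnerProductSpace

/-- The normal cone of convex analysis: empty outside `C`. -/
def normalCone {E : Type*} [NormedAddCommGroup E] [InnerProductSpace ℝ E]
    (C : Set E) (x : E) : Set E :=
  {ζ | x ∈ C ∧ ∀ c ∈ C, ⟪ζ, c - x⟫_ℝ ≤ 0}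

/-- A solution of the sweeping process `-x'(t) ∈ N_{C(t)}(x(t))`: a Lipschitz
function satisfying the differential inclusion a.e. -/
def IsSweepingSolution {E : Type*} [NormedAddCommGroup E] [InnerProductSpace ℝ E]
    (C : ℝ → Set E) (x : ℝ → E) : Prop :=
  (∃ K : NNReal, LipschitzWith K x) ∧ (∀ t, x t ∈ C t) ∧
    ∀ᵐ t ∂(volume : Measure ℝ), ∃ v : E, HasDerivAt x v t ∧ -v ∈ normalCone (C t) (x t)

/-!
By monotonicity of the normal cone, `‖x - y‖²` has a.e. nonpositive derivative; being absolutely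
continuous it is nonincreasing, and being `T`-periodic it is constant. Hence
`⟪x' - y', x - y⟫ = 0` a.e., and this cross term is exactly what separates the normal-cone
inequality at `θ x + (1 - θ) y` from the convex combination of those at `x` and at `y`.
-/

theorem antitone_of_ae_deriv_nonpos {f : ℝ → ℝ}
    (hf : ∀ a b, AbsolutelyContinuousOnInterval f a b) (hd : ∀ᵐ t, deriv f t ≤ 0) : Antitone f := by
  intro a b hab
  have h : 0 ≤ ∫ t in a..b, -deriv f t :=
    intervalIntegral.integral_nonneg_of_ae hab (hd.mono fun _ => neg_nonneg.2)
  rw [intervalIntegral.integral_neg, (hf a b).integral_deriv_eq_sub] at h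
  linarith

theorem Function.Periodic.eq_of_antitone {β : Type*} [PartialOrder β] {f : ℝ → β} {T : ℝ}
    (hp : Function.Periodic f T) (hT : 0 < T) (hf : Antitone f) (s t : ℝ) : f s = f t := by
  have key : ∀ s t, f s ≤ f t := fun s t => by
    obtain ⟨n, hn⟩ := exists_nat_gt ((t - s) / T)
    rw [← hp.nat_mul n s]
    exact hf (by linarith [(div_lt_iff₀ hT).mp hn])
  exact le_antisymm (key s t) (key t s)

section NormalCone

variable {E : Type*} [NormedAddCommGroup E] [InnerProductSpace ℝ E] {C : Set E} {x y ζ η : E}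

theorem inner_sub_sub_nonneg_of_mem_normalCone (hζ : ζ ∈ normalCone C x)
    (hη : η ∈ normalCone C y) : 0 ≤ ⟪ζ - η, x - y⟫_ℝ := by
  have h₁ := hζ.2 y hη.1
  have h₂ := hη.2 x hζ.1
  rw [← neg_sub x y, inner_neg_right] at h₁
  rw [inner_sub_left]
  linarith

theorem smul_add_smul_mem_normalCone (hC : Convex ℝ C) (hζ : ζ ∈ normalCone C x)
    (hη : η ∈ normalCone C y) (horth : ⟪ζ - η, x - y⟫_ℝ = 0) {a b : ℝ} (ha : 0 ≤ a)
    (hb : 0 ≤ b) (hab : a + b = 1) : a • ζ + b • η ∈ normalCone C (a • x + b • y) := by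
  refine ⟨hC hζ.1 hη.1 ha hb hab, fun c hc => ?_⟩
  have hsplit : ⟪a • ζ + b • η, c - (a • x + b • y)⟫_ℝ
      = a * ⟪ζ, c - x⟫_ℝ + b * ⟪η, c - y⟫_ℝ + a * b * ⟪ζ - η, x - y⟫_ℝ := by
    obtain rfl : b = 1 - a := by linarith
    simp only [inner_add_left, inner_sub_left, inner_add_right, inner_sub_right,
      real_inner_smul_left, real_inner_smul_right]
    ring
  rw [hsplit, horth, mul_zero, add_zero]
  exact add_nonpos (mul_nonpos_of_nonneg_of_nonpos ha (hζ.2 c hc))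
    (mul_nonpos_of_nonneg_of_nonpos hb (hη.2 c hc))

end NormalCone

namespace IsSweepingSolution

variable {E : Type*} [NormedAddCommGroup E] [InnerProductSpace ℝ E] {C : ℝ → Set E}
  {x y : ℝ → E}

theorem antitone_norm_sub_sq (hx : IsSweepingSolution C x) (hy : IsSweepingSolution C y) :
    Antitone fun t => ‖x t - y t‖ ^ 2 := by
  obtain ⟨⟨Kx, hKx⟩, -, hxd⟩ := hx
  obtain ⟨⟨Ky, hKy⟩, -, hyd⟩ := hy
  refine antitone_of_ae_deriv_nonpos (fun a b => ?_) ?_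
  · have h := ((lipschitzWith_one_norm.comp (hKx.sub hKy)).lipschitzOnWith
      (s := Set.uIcc a b)).absolutelyContinuousOnInterval
    simpa only [sq, Function.comp_apply] using h.fun_mul h
  · filter_upwards [hxd, hyd] with t ⟨v, hv, hvx⟩ ⟨w, hw, hwy⟩
    have hmono := inner_sub_sub_nonneg_of_mem_normalCone hvx hwy
    rw [neg_sub_neg, ← neg_sub, inner_neg_left, real_inner_comm] at hmono
    rw [(hv.fun_sub hw).norm_sq.deriv]
    linarith

theorem smul_add_smul (hC : ∀ t, Convex ℝ (C t)) (hx : IsSweepingSolution C x)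
    (hy : IsSweepingSolution C y) (hdist : ∀ s t, ‖x s - y s‖ = ‖x t - y t‖) {a b : ℝ}
    (ha : 0 ≤ a) (hb : 0 ≤ b) (hab : a + b = 1) :
    IsSweepingSolution C fun t => a • x t + b • y t := by
  obtain ⟨⟨Kx, hKx⟩, hxC, hxd⟩ := hx
  obtain ⟨⟨Ky, hKy⟩, hyC, hyd⟩ := hy
  refine ⟨⟨‖a‖₊ * Kx + ‖b‖₊ * Ky,
      ((lipschitzWith_smul a).comp hKx).add ((lipschitzWith_smul b).comp hKy)⟩,
    fun t => hC t (hxC t) (hyC t) ha hb hab, ?_⟩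
  filter_upwards [hxd, hyd] with t ⟨v, hv, hvx⟩ ⟨w, hw, hwy⟩
  have horth : ⟪x t - y t, v - w⟫_ℝ = 0 := by
    have hconst : HasDerivAt (fun s => ‖x s - y s‖ ^ 2) 0 t := by
      simp_rw [hdist _ t]
      exact hasDerivAt_const _ _
    linarith [(hv.fun_sub hw).norm_sq.unique hconst]
  refine ⟨a • v + b • w, (hv.const_smul a).add (hw.const_smul b), ?_⟩
  rw [neg_add, ← smul_neg, ← smul_neg]
  refine smul_add_smul_mem_normalCone (hC t) hvx hwy ?_ ha hb hab
  rw [neg_sub_neg, ← neg_sub, inner_neg_left, real_inner_comm, horth, neg_zero]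

end IsSweepingSolution

theorem stmt_4_general {E : Type*} [NormedAddCommGroup E] [InnerProductSpace ℝ E]
    (T : ℝ) (hT : 0 < T) (C : ℝ → Set E)
    (hcv : ∀ t, Convex ℝ (C t))
    (x y : ℝ → E) (hx : IsSweepingSolution C x) (hy : IsSweepingSolution C y)
    (hxT : ∀ t, x (t + T) = x t) (hyT : ∀ t, y (t + T) = y t)
    (θ : ℝ) (hθ : θ ∈ Set.Ioo (0:ℝ) 1) :
    IsSweepingSolution C (fun t => θ • x t + (1 - θ) • y t) ∧
      (∀ t, θ • x (t + T) + (1 - θ) • y (t + T) = θ • x t + (1 - θ) • y t) := by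
  have hper : Function.Periodic (fun t => ‖x t - y t‖ ^ 2) T := fun t => by
    simp only [hxT, hyT]
  have hdist (s t : ℝ) : ‖x s - y s‖ = ‖x t - y t‖ :=
    (sq_eq_sq₀ (norm_nonneg _) (norm_nonneg _)).1
      (hper.eq_of_antitone hT (hx.antitone_norm_sub_sq hy) s t)
  exact ⟨hx.smul_add_smul hcv hy hdist hθ.1.le (by linarith [hθ.2]) (by ring),
    fun t => by rw [hxT, hyT]⟩

theorem stmt_4 {E : Type*} [NormedAddCommGroup E] [InnerProductSpace ℝ E]
    [FiniteDimensional ℝ E]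
    (T : ℝ) (hT : 0 < T) (C : ℝ → Set E)
    (hper : ∀ t, C (t + T) = C t)
    (hne : ∀ t, (C t).Nonempty) (hcl : ∀ t, IsClosed (C t)) (hcv : ∀ t, Convex ℝ (C t))
    (L : ℝ) (hL : 0 ≤ L)
    (hLip : ∀ s t : ℝ, Metric.hausdorffDist (C s) (C t) ≤ L * |s - t|)
    (x y : ℝ → E) (hx : IsSweepingSolution C x) (hy : IsSweepingSolution C y)
    (hxT : ∀ t, x (t + T) = x t) (hyT : ∀ t, y (t + T) = y t)
    (θ : ℝ) (hθ : θ ∈ Set.Ioo (0:ℝ) 1) :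
    IsSweepingSolution C (fun t => θ • x t + (1 - θ) • y t) ∧
      (∀ t, θ • x (t + T) + (1 - θ) • y (t + T) = θ • x t + (1 - θ) • y t) :=
  stmt_4_general T hT C hcv x y hx hy hxT hyT θ hθ
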